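/- arXiv:1405.6408 — 4 statements merged into one kernel-verified Lean document; each statement's English description precedes it below -/
import Mathlib

section
/- Let (n_t) and (m_t) be sequences of positive integers with n_t ≤ m_t, n_t → ∞, and n_t/m_t → c̄ ∈ (0,1) as t → ∞. Then μ0(1, n_t, m_t) → e·(1−c̄)^{(1−c̄)/c̄} as t → ∞. -/
open Finset Filter Topology
open Finset

/-- Exact `p`-th moment of the GLRT statistic under `H₀`. -/
noncomputable def mu0 (p n m : ℕ) : ℝ :=
  Real.Gamma ((m : ℝ) * n) / ((n : ℝ) ^ p * Real.Gamma ((m : ℝ) * n - p)) *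
    ∏ j ∈ Finset.range n,
      Real.Gamma ((m : ℝ) - n + 1 - p / n + j) / Real.Gamma ((m : ℝ) - n + 1 + j)

/-!
Since `Γ(mn) = (mn - 1) Γ(mn - 1)`, `μ₀(1, n, m) = (m - 1/n) ∏_{j<n} Γ(x_j - 1/n) / Γ(x_j)` with
`x_j = m - n + 1 + j`. Log-convexity of `Γ` together with `log Γ(y + 1) - log Γ(y) = log y` traps
`n (log Γ(x_j) - log Γ(x_j - 1/n))` between `log (x_j - 1)` and `log x_j`. Comparing the sum with
`∫_{m-n}^{m} log` then gives
`log μ₀ = 1 + log (1 - 1/(nm)) + (m/n - 1) log (1 - n/m) + O(log (m/(m-n)) / n)`,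
which tends to `1 + ((1 - c)/c) log (1 - c)`.
-/

open Real

namespace Real

theorem log_Gamma_add_one {y : ℝ} (hy : 0 < y) :
    log (Gamma (y + 1)) = log (Gamma y) + log y := by
  rw [Gamma_add_one hy.ne', log_mul hy.ne' (Gamma_pos_of_pos hy).ne', add_comm]

theorem mul_log_sub_one_le_log_Gamma_sub_log_Gamma_sub {x ε : ℝ} (hx : 1 < x) (hε0 : 0 ≤ ε)
    (hε1 : ε ≤ 1) : ε * log (x - 1) ≤ log (Gamma x) - log (Gamma (x - ε)) := by
  have hconv := convexOn_log_Gamma.2 (Set.mem_Ioi.2 (by linarith : (0 : ℝ) < x))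
    (Set.mem_Ioi.2 (by linarith : (0 : ℝ) < x - 1)) (by linarith : 0 ≤ 1 - ε) hε0 (by ring)
  have hfeq := log_Gamma_add_one (by linarith : 0 < x - 1)
  simp only [smul_eq_mul, Function.comp_apply, sub_add_cancel] at hconv hfeq
  rw [show (1 - ε) * x + ε * (x - 1) = x - ε by ring] at hconv
  linear_combination hconv - ε * hfeq

theorem log_Gamma_sub_log_Gamma_sub_le_mul_log {x ε : ℝ} (hε0 : 0 ≤ ε) (hε1 : ε ≤ 1)
    (hεx : ε < x) : log (Gamma x) - log (Gamma (x - ε)) ≤ ε * log (x - ε) := by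
  have hconv := convexOn_log_Gamma.2 (Set.mem_Ioi.2 (by linarith : (0 : ℝ) < x - ε))
    (Set.mem_Ioi.2 (by linarith : (0 : ℝ) < x - ε + 1)) (by linarith : 0 ≤ 1 - ε) hε0 (by ring)
  have hfeq := log_Gamma_add_one (by linarith : 0 < x - ε)
  simp only [smul_eq_mul, Function.comp_apply] at hconv
  rw [show (1 - ε) * (x - ε) + ε * (x - ε + 1) = x by ring] at hconv
  linear_combination hconv + ε * hfeq

end Real

theorem abs_sum_sub_integral_le_of_monotoneOn {f : ℝ → ℝ} {a : ℝ} {n : ℕ} {u : ℕ → ℝ}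
    (hf : MonotoneOn f (Set.Icc a (a + n)))
    (hu : ∀ i ∈ range n, f (a + i) ≤ u i ∧ u i ≤ f (a + ↑(i + 1))) :
    |∑ i ∈ range n, u i - ∫ x in a..a + n, f x| ≤ f (a + n) - f a := by
  have hlower : ∑ i ∈ range n, f (a + i) ≤ ∑ i ∈ range n, u i :=
    sum_le_sum fun i hi => (hu i hi).1
  have hupper : ∑ i ∈ range n, u i ≤ ∑ i ∈ range n, f (a + ↑(i + 1)) :=
    sum_le_sum fun i hi => (hu i hi).2
  have htelescope : ∑ i ∈ range n, f (a + ↑(i + 1)) - ∑ i ∈ range n, f (a + i) =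
      f (a + n) - f a := by
    simpa using sum_range_sub (fun i : ℕ => f (a + i)) n
  rw [abs_le]
  constructor <;> linarith [hf.sum_le_integral, hf.integral_le_sum]

theorem abs_sum_log_Gamma_sub_div_sub_integral_log_le {a ε : ℝ} (N : ℕ) (ha : 0 < a)
    (hε0 : 0 < ε) (hε1 : ε ≤ 1) :
    |∑ j ∈ range N, (log (Gamma (a + 1 + j)) - log (Gamma (a + 1 + j - ε))) / ε -
      ∫ x in a..a + N, log x| ≤ log (a + N) - log a := by
  refine abs_sum_sub_integral_le_of_monotoneOn
    (fun x hx y _ hxy => log_le_log (by linarith [hx.1]) hxy) fun j _ => ⟨?_, ?_⟩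
  · have hj : (0 : ℝ) ≤ j := j.cast_nonneg
    have h := mul_log_sub_one_le_log_Gamma_sub_log_Gamma_sub (x := a + 1 + j) (by linarith)
      hε0.le hε1
    rwa [show a + 1 + j - 1 = a + j by ring, mul_comm, ← le_div_iff₀ hε0] at h
  · have hj : (0 : ℝ) ≤ j := j.cast_nonneg
    rw [div_le_iff₀ hε0, mul_comm]
    refine (log_Gamma_sub_log_Gamma_sub_le_mul_log hε0.le hε1 (by linarith)).trans ?_
    exact mul_le_mul_of_nonneg_left (log_le_log (by linarith) (by push_cast; linarith)) hε0.le

theorem pos_and_lt_of_div_mem_Ioo {n m : ℕ} (h : (n : ℝ) / m ∈ Set.Ioo 0 1) : 0 < n ∧ n < m := by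
  obtain ⟨hpos, hlt⟩ := h
  have hm : (0 : ℝ) < m := by
    by_contra! hm
    simp [le_antisymm hm m.cast_nonneg] at hpos
  exact ⟨by exact_mod_cast (div_pos_iff_of_pos_right hm).1 hpos,
    by exact_mod_cast (div_lt_one hm).1 hlt⟩

theorem mu0_one_eq {n m : ℕ} (h : 1 < m * n) :
    mu0 1 n m = ((m : ℝ) - (n : ℝ)⁻¹) *
      ∏ j ∈ range n, Gamma ((m : ℝ) - n + 1 + j - (n : ℝ)⁻¹) / Gamma ((m : ℝ) - n + 1 + j) := by
  have hmn : (0 : ℝ) < m * n - 1 := by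
    have : (1 : ℝ) < m * n := by exact_mod_cast h
    linarith
  have hn : (n : ℝ) ≠ 0 := Nat.cast_ne_zero.2 (by rintro rfl; simp at h)
  have hGamma : Gamma ((m : ℝ) * n) = (m * n - 1) * Gamma (m * n - 1) := by
    rw [← Gamma_add_one hmn.ne', sub_add_cancel]
  unfold mu0
  congr 1
  · rw [hGamma, Nat.cast_one, pow_one]
    field_simp [(Gamma_pos_of_pos hmn).ne']
  · refine prod_congr rfl fun j _ => ?_
    rw [Nat.cast_one]
    ring_nf

theorem mu0_one_factors_pos {n m : ℕ} (hn : 0 < n) (hnm : n < m) :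
    0 < (m : ℝ) - (n : ℝ)⁻¹ ∧ ∀ j : ℕ,
      0 < Gamma ((m : ℝ) - n + 1 + j - (n : ℝ)⁻¹) ∧ 0 < Gamma ((m : ℝ) - n + 1 + j) := by
  have h1 : (1 : ℝ) ≤ n := by exact_mod_cast hn
  have h2 : (n : ℝ) + 1 ≤ m := by exact_mod_cast hnm
  have h3 : 0 < (n : ℝ)⁻¹ := by positivity
  have h4 : (n : ℝ)⁻¹ ≤ 1 := inv_le_one_of_one_le₀ h1
  refine ⟨by linarith, fun j => ⟨?_, ?_⟩⟩ <;>
    exact Gamma_pos_of_pos (by linarith [j.cast_nonneg (α := ℝ)])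

theorem mu0_one_pos {n m : ℕ} (hn : 0 < n) (hnm : n < m) : 0 < mu0 1 n m := by
  obtain ⟨hm, hGamma⟩ := mu0_one_factors_pos hn hnm
  rw [mu0_one_eq (by nlinarith)]
  exact mul_pos hm (prod_pos fun j _ => div_pos (hGamma j).1 (hGamma j).2)

theorem log_mu0_one_eq {n m : ℕ} (hn : 0 < n) (hnm : n < m) :
    log (mu0 1 n m) = log ((m : ℝ) - (n : ℝ)⁻¹) -
      ∑ j ∈ range n, (log (Gamma ((m : ℝ) - n + 1 + j)) -
        log (Gamma ((m : ℝ) - n + 1 + j - (n : ℝ)⁻¹))) := by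
  obtain ⟨hm, hGamma⟩ := mu0_one_factors_pos hn hnm
  have hfactor (j : ℕ) := div_pos (hGamma j).1 (hGamma j).2
  rw [mu0_one_eq (by nlinarith), log_mul hm.ne' (prod_pos fun j _ => hfactor j).ne',
    log_prod fun j _ => (hfactor j).ne', sub_eq_add_neg _ (∑ j ∈ range n, _),
    ← sum_neg_distrib]
  refine congrArg _ (sum_congr rfl fun j _ => ?_)
  rw [log_div (hGamma j).1.ne' (hGamma j).2.ne', neg_sub]

noncomputable def mu0OneLogApprox (ε r : ℝ) : ℝ :=
  1 + log (1 - ε ^ 2 * r) + (r⁻¹ - 1) * log (1 - r)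

theorem abs_log_mu0_one_sub_le {n m : ℕ} (hn : 0 < n) (hnm : n < m) :
    |log (mu0 1 n m) - mu0OneLogApprox (n : ℝ)⁻¹ (n / m)| ≤ -log (1 - n / m) / n := by
  have hn' : (1 : ℝ) ≤ n := by exact_mod_cast hn
  have hnm' : (n : ℝ) + 1 ≤ m := by exact_mod_cast hnm
  have hm0 : (m : ℝ) ≠ 0 := by linarith
  set a : ℝ := m - n with ha_def
  have hm : (m : ℝ) = a + n := by ring
  have hsum := abs_sum_log_Gamma_sub_div_sub_integral_log_le n (a := a) (ε := (n : ℝ)⁻¹)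
    (by linarith) (by positivity) (inv_le_one_of_one_le₀ hn')
  rw [integral_log, ← hm, ← sum_div, div_inv_eq_mul] at hsum
  have hlog_ratio : log (1 - n / m) = log a - log m := by
    rw [← log_div (by linarith) hm0, ha_def]
    congr 1
    field_simp
  have happrox : mu0OneLogApprox (n : ℝ)⁻¹ (n / m) =
      log (m - (n : ℝ)⁻¹) - (m * log m - a * log a - m + a) / n := by
    have hlog_corr : log (1 - (n : ℝ)⁻¹ ^ 2 * (n / m)) = log (m - (n : ℝ)⁻¹) - log m := by
      rw [← log_div (mu0_one_factors_pos hn hnm).1.ne' hm0]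
      congr 1
      field_simp
    rw [mu0OneLogApprox, hlog_corr, hlog_ratio]
    field_simp
    ring
  rw [log_mu0_one_eq hn hnm, ← ha_def, happrox, hlog_ratio, neg_sub]
  generalize (∑ j ∈ range n, (log (Gamma (a + 1 + j)) - log (Gamma (a + 1 + j - (n : ℝ)⁻¹)))) = S
    at hsum ⊢
  have hn0 : (n : ℝ) ≠ 0 := by positivity
  rw [show ∀ L I : ℝ, L - S - (L - I / n) = -(S * n - I) / n by intros; field_simp; ring,
    abs_div, abs_neg, abs_of_pos (by positivity : (0 : ℝ) < n)]
  exact div_le_div_of_nonneg_right (hm ▸ hsum) (by positivity)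

theorem Filter.Tendsto.mu0OneLogApprox {α : Type*} {l : Filter α} {ε r : α → ℝ} {c : ℝ}
    (hε : Tendsto ε l (𝓝 0)) (hr : Tendsto r l (𝓝 c)) (hc0 : c ≠ 0) (hc1 : c < 1) :
    Tendsto (fun x => mu0OneLogApprox (ε x) (r x)) l (𝓝 (mu0OneLogApprox 0 c)) := by
  refine ((tendsto_const_nhds.add (Tendsto.log ?_ ?_)).add
    (((hr.inv₀ hc0).sub tendsto_const_nhds).mul (Tendsto.log ?_ ?_)))
  · exact tendsto_const_nhds.sub ((hε.pow 2).mul hr)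
  · simp
  · exact tendsto_const_nhds.sub hr
  · linarith

theorem exp_mu0OneLogApprox_zero {c : ℝ} (hc0 : 0 < c) (hc1 : c < 1) :
    exp (mu0OneLogApprox 0 c) = exp 1 * (1 - c) ^ ((1 - c) / c) := by
  rw [rpow_def_of_pos (by linarith), ← exp_add, mu0OneLogApprox]
  congr 1
  field_simp
  simp

theorem mu0_one_tendsto_general (n m : ℕ → ℕ)
    (hn : Tendsto (fun t => (n t : ℝ)) atTop atTop)
    (c : ℝ) (hc : c ∈ Set.Ioo (0 : ℝ) 1)
    (hratio : Tendsto (fun t => (n t : ℝ) / (m t : ℝ)) atTop (𝓝 c)) :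
    Tendsto (fun t => mu0 1 (n t) (m t)) atTop
      (𝓝 (Real.exp 1 * (1 - c) ^ ((1 - c) / c))) := by
  obtain ⟨hc0, hc1⟩ := hc
  have hinv : Tendsto (fun t => (n t : ℝ)⁻¹) atTop (𝓝 0) := tendsto_inv_atTop_zero.comp hn
  have hvalid : ∀ᶠ t in atTop, 0 < n t ∧ n t < m t :=
    (hratio.eventually (Ioo_mem_nhds hc0 hc1)).mono fun t => pos_and_lt_of_div_mem_Ioo
  have happrox : Tendsto (fun t => mu0OneLogApprox (n t : ℝ)⁻¹ (n t / m t)) atTop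
      (𝓝 (mu0OneLogApprox 0 c)) :=
    hinv.mu0OneLogApprox hratio hc0.ne' hc1
  have herror : Tendsto (fun t => -log (1 - n t / m t) / n t) atTop (𝓝 0) := by
    have hlog_ratio := ((continuousAt_log (by linarith : 1 - c ≠ 0)).tendsto.comp
      ((tendsto_const_nhds (x := (1 : ℝ))).sub hratio)).neg.mul hinv
    rw [mul_zero] at hlog_ratio
    exact hlog_ratio
  have hlog : Tendsto (fun t => log (mu0 1 (n t) (m t))) atTop (𝓝 (mu0OneLogApprox 0 c)) := by
    have hdiff : Tendsto (fun t => log (mu0 1 (n t) (m t)) -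
        mu0OneLogApprox (n t : ℝ)⁻¹ (n t / m t)) atTop (𝓝 0) :=
      squeeze_zero_norm' (hvalid.mono fun t ht => abs_log_mu0_one_sub_le ht.1 ht.2) herror
    simpa using happrox.add hdiff
  rw [← exp_mu0OneLogApprox_zero hc0 hc1]
  refine ((continuous_exp.tendsto _).comp hlog).congr' ?_
  filter_upwards [hvalid] with t ht
  exact exp_log (mu0_one_pos ht.1 ht.2)

/-- limit of the mean of the GLRT statistic under `H₀` when
`n → ∞` and `n/m → c̄ ∈ (0,1)`. -/
theorem mu0_one_tendsto (n m : ℕ → ℕ) (hn0 : ∀ t, 0 < n t) (hnm : ∀ t, n t ≤ m t)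
    (hn : Tendsto (fun t => (n t : ℝ)) atTop atTop)
    (c : ℝ) (hc : c ∈ Set.Ioo (0 : ℝ) 1)
    (hratio : Tendsto (fun t => (n t : ℝ) / (m t : ℝ)) atTop (𝓝 c)) :
    Tendsto (fun t => mu0 1 (n t) (m t)) atTop
      (𝓝 (Real.exp 1 * (1 - c) ^ ((1 - c) / c))) :=
  mu0_one_tendsto_general n m hn c hc hratio
end

section
/- For each integer n ≥ 3, let κ2(n) = μ0(2,n,n) − μ0(1,n,n)² be the second cumulant associated with the moment sequence q ↦ μ0(q,n,n). Then lim_{n→∞} ( n²·κ2(n) − e²·(γ + ln n) ) = 0, where γ is the Euler–Mascheroni constant. -/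
/-!
For `m = n` the Gamma product in `μ₀(p, n, n)` is `P_n(p/n)` (`gammaRatioProd n (p / n)`), where
`P_n(x) = ∏_{j<n} Γ(1 - x + j) / Γ(1 + j)`, and the Gamma prefactors are polynomials in `n`;
hence `n² κ₂(n) = D_n U_n` with `D_n = (n² - 1) P_n(1/n)²` and
`U_n = (n² - 2) P_n(2/n) / P_n(1/n)² - (n² - 1)`.

Weierstrass' product for `Γ` gives, with `ρ(t) = -log (1 - t) - t` (`logRem`),
`log P_n(x) = x ∑_{j<n} (γ - H_j) + ∑_k min(k + 1, n) ρ(x / (k + 1))`.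
In `L_n = log P_n(2/n) - 2 log P_n(1/n)` (`logDefect n`) the linear terms cancel, and
`ρ(2t) - 2ρ(t) = t² + O(t³)`, so
`n² L_n = ∑_k min(k + 1, n) / (k + 1)² + O(1/n) = H_n + 1 + o(1)`;
thus `U_n = n² L_n - 1 + o(1) = γ + log n + o(1)`.
Similarly `log P_n(1/n) = γ - H_n + 1 + O(1/n)`, so `D_n = e² + O(1/n)`, which is fast enough
to absorb the factor `log n` in `(D_n - e²) U_n`.
-/

open Finset Filter Topology

open Real

noncomputable def logRem (t : ℝ) : ℝ := -log (1 - t) - t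

lemma logRem_nonneg {t : ℝ} (ht : t < 1) : 0 ≤ logRem t := by
  have := log_le_sub_one_of_pos (sub_pos.2 ht)
  unfold logRem
  linarith

lemma logRem_le_sq_div {t : ℝ} (ht : t < 1) : logRem t ≤ t ^ 2 / (1 - t) := by
  have h1t : 0 < 1 - t := sub_pos.2 ht
  have := one_sub_inv_le_log_of_pos h1t
  have : 1 - (1 - t)⁻¹ = -(t ^ 2 / (1 - t)) - t := by field_simp; ring
  unfold logRem
  linarith

lemma logRem_le_of_le_third {t : ℝ} (ht : t ≤ 1 / 3) : logRem t ≤ 3 / 2 * t ^ 2 := by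
  refine (logRem_le_sq_div (by linarith)).trans ?_
  rw [div_le_iff₀ (by linarith)]
  nlinarith [sq_nonneg t]

lemma logRem_two_mul_sub_eq {t : ℝ} (ht : 2 * t < 1) :
    logRem (2 * t) - 2 * logRem t = -log ((1 - 2 * t) / (1 - t) ^ 2) := by
  rw [log_div (by linarith) (pow_pos (by linarith) 2).ne', log_pow]
  unfold logRem
  push_cast
  ring

lemma sq_le_logRem_two_mul_sub {t : ℝ} (ht0 : 0 ≤ t) (ht : 2 * t < 1) :
    t ^ 2 ≤ logRem (2 * t) - 2 * logRem t := by
  have h1t : 0 < 1 - t := by linarith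
  have hlog := log_le_sub_one_of_pos (x := (1 - 2 * t) / (1 - t) ^ 2) (by positivity)
  have hy : (1 - 2 * t) / (1 - t) ^ 2 - 1 = -(t ^ 2 / (1 - t) ^ 2) := by field_simp; ring
  have hsq : t ^ 2 ≤ t ^ 2 / (1 - t) ^ 2 :=
    le_div_self (sq_nonneg t) (by positivity) (pow_le_one₀ h1t.le (by linarith))
  rw [logRem_two_mul_sub_eq ht]
  linarith

lemma logRem_two_mul_sub_le {t : ℝ} (ht0 : 0 ≤ t) (ht : t ≤ 1 / 3) :
    logRem (2 * t) - 2 * logRem t ≤ t ^ 2 + 6 * t ^ 3 := by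
  have h12t : 0 < 1 - 2 * t := by linarith
  have hlog := one_sub_inv_le_log_of_pos (div_pos h12t (pow_pos (by linarith : 0 < 1 - t) 2))
  have hy : 1 - ((1 - 2 * t) / (1 - t) ^ 2)⁻¹ = -(t ^ 2 / (1 - 2 * t)) := by
    have : 1 - t ≠ 0 := by linarith
    field_simp
    ring
  have hcube : t ^ 2 / (1 - 2 * t) ≤ t ^ 2 + 6 * t ^ 3 := by
    rw [div_le_iff₀ h12t]
    nlinarith [pow_nonneg ht0 3, sq_nonneg t]
  rw [logRem_two_mul_sub_eq (by linarith)]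
  linarith

lemma tendsto_one_div_add_const (c : ℝ) :
    Tendsto (fun N : ℕ => 1 / ((N : ℝ) + c)) atTop (𝓝 0) := by
  simpa only [one_div, Function.comp_def] using
    tendsto_inv_atTop_zero.comp (tendsto_atTop_add_const_right _ c tendsto_natCast_atTop_atTop)

lemma hasSum_one_div_mul_add_one {c : ℝ} (hc : 0 < c) :
    HasSum (fun k : ℕ => 1 / ((k + c) * (k + c + 1))) (1 / c) := by
  have hterm (k : ℕ) : 1 / ((k + c) * (k + c + 1)) = 1 / (k + c) - 1 / ((k + 1 : ℕ) + c) := by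
    have : (0 : ℝ) < k + c := by positivity
    push_cast
    field_simp
    ring
  rw [hasSum_iff_tendsto_nat_of_nonneg (fun k => by positivity)]
  simp_rw [hterm, sum_range_sub' (fun k : ℕ => 1 / ((k : ℝ) + c))]
  simpa using tendsto_const_nhds.sub (tendsto_one_div_add_const c)

lemma summable_one_div_add_sq (c : ℝ) : Summable fun k : ℕ => 1 / ((k : ℝ) + c) ^ 2 :=
  ((summable_one_div_nat_add_rpow c 2).2 one_lt_two).congr fun k => by
    rw [rpow_two, sq_abs]

lemma one_div_le_tsum_one_div_add_sq {c : ℝ} (hc : 0 < c) :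
    1 / c ≤ ∑' k : ℕ, 1 / ((k : ℝ) + c) ^ 2 := by
  rw [← (hasSum_one_div_mul_add_one hc).tsum_eq]
  refine (hasSum_one_div_mul_add_one hc).summable.tsum_le_tsum (fun k => ?_)
    (summable_one_div_add_sq c)
  have : (0 : ℝ) < k + c := by positivity
  gcongr
  linarith

lemma tsum_one_div_add_sq_le {c : ℝ} (hc : 1 < c) :
    ∑' k : ℕ, 1 / ((k : ℝ) + c) ^ 2 ≤ 1 / (c - 1) := by
  have hc' : 0 < c - 1 := by linarith
  rw [← (hasSum_one_div_mul_add_one hc').tsum_eq]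
  refine (summable_one_div_add_sq c).tsum_le_tsum (fun k => ?_)
    (hasSum_one_div_mul_add_one hc').summable
  have : (0 : ℝ) < k + (c - 1) := by positivity
  rw [show (k : ℝ) + (c - 1) + 1 = k + c by ring, sq]
  gcongr
  linarith

lemma tendsto_mul_tsum_one_div_add_sq :
    Tendsto (fun n : ℕ => (n : ℝ) * ∑' k : ℕ, 1 / ((k : ℝ) + (n + 1)) ^ 2) atTop
      (𝓝 1) := by
  refine tendsto_of_tendsto_of_tendsto_of_le_of_le' (tendsto_natCast_div_add_atTop (1 : ℝ))
    tendsto_const_nhds ?_ ?_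
  · filter_upwards with n
    have h := one_div_le_tsum_one_div_add_sq (c := (n : ℝ) + 1) (by positivity)
    calc (n : ℝ) / (n + 1) = n * (1 / (n + 1)) := by ring
      _ ≤ _ := by gcongr
  · filter_upwards [eventually_ge_atTop 1] with n hn
    have hn' : (1 : ℝ) ≤ n := by exact_mod_cast hn
    have hn0 : (n : ℝ) ≠ 0 := by positivity
    have h := tsum_one_div_add_sq_le (c := (n : ℝ) + 1) (by linarith)
    calc (n : ℝ) * ∑' k : ℕ, 1 / ((k : ℝ) + (n + 1)) ^ 2 ≤ n * (1 / (n + 1 - 1)) := by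
          gcongr
      _ = 1 := by rw [add_sub_cancel_right, mul_one_div_cancel hn0]

lemma summable_ite_le {f : ℕ → ℝ} (hf : Summable f) (j : ℕ) :
    Summable fun k : ℕ => if j ≤ k then f k else 0 :=
  hf.abs.of_norm_bounded fun k => by split_ifs <;> simp

lemma tsum_nat_add_eq_tsum_ite {f : ℕ → ℝ} (hf : Summable f) (j : ℕ) :
    ∑' m : ℕ, f (m + j) = ∑' k : ℕ, if j ≤ k then f k else 0 := by
  rw [← (summable_ite_le hf j).sum_add_tsum_nat_add j,
    sum_eq_zero fun k hk => if_neg (by simpa using hk), zero_add]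
  simp

lemma sum_range_tsum_nat_add {f : ℕ → ℝ} (hf : Summable f) (n : ℕ) :
    ∑ j ∈ range n, ∑' m : ℕ, f (m + j) =
      ∑' k : ℕ, ((min (k + 1) n : ℕ) : ℝ) * f k := by
  -- `f k` occurs in the `j`-th inner sum iff `j ≤ k`, i.e. for `min (k + 1) n` indices `j < n`.
  simp_rw [tsum_nat_add_eq_tsum_ite hf]
  rw [← Summable.tsum_finsetSum fun j _ => summable_ite_le hf j]
  congr 1 with k
  rw [← sum_filter, sum_const, nsmul_eq_mul]
  congr 2
  rw [show (range n).filter (· ≤ k) = range (min (k + 1) n) by ext; simp; omega, card_range]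

lemma summable_min_mul {f : ℕ → ℝ} (hf : Summable f) (n : ℕ) :
    Summable fun k : ℕ => ((min (k + 1) n : ℕ) : ℝ) * f k :=
  (hf.abs.mul_left (n : ℝ)).of_norm_bounded fun k => by
    rw [norm_mul, Real.norm_natCast, norm_eq_abs]
    gcongr
    exact_mod_cast min_le_right _ _

lemma tsum_min_div_sq (n : ℕ) :
    ∑' k : ℕ, ((min (k + 1) n : ℕ) : ℝ) / ((k : ℝ) + 1) ^ 2 =
      (harmonic n : ℝ) + n * ∑' k : ℕ, 1 / ((k : ℝ) + (n + 1)) ^ 2 := by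
  have hs : Summable fun k : ℕ => ((min (k + 1) n : ℕ) : ℝ) / ((k : ℝ) + 1) ^ 2 := by
    simpa only [mul_one_div] using summable_min_mul (summable_one_div_add_sq 1) n
  rw [← hs.sum_add_tsum_nat_add n, ← tsum_mul_left]
  congr 1
  · simp only [harmonic, Rat.cast_sum]
    refine sum_congr rfl fun k hk => ?_
    rw [min_eq_left (by simpa using hk)]
    push_cast
    field_simp
  · congr 1 with k
    rw [min_eq_right (by omega)]
    push_cast
    ring

lemma sum_range_harmonic (n : ℕ) :
    ∑ j ∈ range n, (harmonic j : ℝ) = n * harmonic n - n := by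
  induction n with
  | zero => simp
  | succ n ih =>
    rw [sum_range_succ, ih, harmonic_succ]
    push_cast
    field_simp
    ring

lemma abs_harmonic_sub_log_sub_le {n : ℕ} (hn : 1 ≤ n) :
    |(harmonic n : ℝ) - log n - eulerMascheroniConstant| ≤ 1 / n := by
  have hn0 : (0 : ℝ) < n := by exact_mod_cast hn
  have hupper := eulerMascheroniConstant_lt_eulerMascheroniSeq' n
  have hlower := eulerMascheroniSeq_lt_eulerMascheroniConstant n
  simp only [eulerMascheroniSeq', eulerMascheroniSeq, if_neg (by omega : n ≠ 0)] at hupper hlower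
  have hlog : log ((n : ℝ) + 1) - log n ≤ 1 / n := by
    rw [← log_div (by positivity) hn0.ne']
    refine (log_le_sub_one_of_pos (by positivity)).trans_eq ?_
    field_simp
    ring
  rw [abs_le]
  constructor <;> linarith

lemma tendsto_log_natCast_div : Tendsto (fun n : ℕ => log n / n) atTop (𝓝 0) :=
  isLittleO_log_id_atTop.tendsto_div_nhds_zero.comp tendsto_natCast_atTop_atTop

lemma tendsto_mul_const_add_log_of_abs_le {f : ℕ → ℝ} {C : ℝ} (c : ℝ)
    (hf : ∀ᶠ n : ℕ in atTop, |f n| ≤ C / n) :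
    Tendsto (fun n : ℕ => f n * (c + log n)) atTop (𝓝 0) := by
  have hlim := ((tendsto_const_div_atTop_nhds_zero_nat (C * |c|)).add
    (tendsto_log_natCast_div.const_mul C))
  rw [mul_zero, add_zero] at hlim
  refine squeeze_zero_norm' ?_ hlim
  filter_upwards [hf, eventually_ge_atTop 1] with n hn hn1
  have hlog : 0 ≤ log n := log_natCast_nonneg n
  rw [norm_mul, norm_eq_abs, norm_eq_abs]
  calc |f n| * |c + log n| ≤ C / n * (|c| + log n) :=
        mul_le_mul hn ((abs_add_le _ _).trans_eq (by rw [abs_of_nonneg hlog]))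
          (abs_nonneg _) ((abs_nonneg _).trans hn)
    _ = _ := by ring

lemma abs_log_sq_sub_one_sub_le {n : ℕ} (hn : 2 ≤ n) :
    |log ((n : ℝ) ^ 2 - 1) - 2 * log n| ≤ 1 / n := by
  have hn2 : (2 : ℝ) ≤ n := by exact_mod_cast hn
  have hpos : (0 : ℝ) < (n : ℝ) ^ 2 - 1 := by nlinarith
  have hy : 0 < ((n : ℝ) ^ 2 - 1) / n ^ 2 := by positivity
  have heq : log ((n : ℝ) ^ 2 - 1) - 2 * log n = log (((n : ℝ) ^ 2 - 1) / n ^ 2) := by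
    rw [log_div hpos.ne' (by positivity), log_pow]
    push_cast
    ring
  have hupper := log_le_sub_one_of_pos hy
  have hlower := one_sub_inv_le_log_of_pos hy
  have h1 : ((n : ℝ) ^ 2 - 1) / n ^ 2 - 1 ≤ 0 := by
    rw [sub_nonpos, div_le_one (by positivity)]
    linarith
  have h2 : -(1 / (n : ℝ)) ≤ 1 - (((n : ℝ) ^ 2 - 1) / n ^ 2)⁻¹ := by
    rw [inv_div, show (1 : ℝ) - n ^ 2 / (n ^ 2 - 1) = -(1 / (n ^ 2 - 1)) by field_simp; ring,
      neg_le_neg_iff]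
    gcongr
    nlinarith
  rw [heq, abs_le]
  constructor <;> linarith

lemma summable_logRem_div {x : ℝ} (hx0 : 0 ≤ x) (hx1 : x < 1) :
    Summable fun k : ℕ => logRem (x / ((k : ℝ) + 1)) := by
  refine ((summable_one_div_add_sq 1).mul_left (x ^ 2 / (1 - x))).of_nonneg_of_le
    (fun k => logRem_nonneg ((div_le_self hx0 (by simp)).trans_lt hx1)) fun k => ?_
  have ht : x / ((k : ℝ) + 1) ≤ x := div_le_self hx0 (by simp)
  calc logRem (x / ((k : ℝ) + 1)) ≤ (x / ((k : ℝ) + 1)) ^ 2 / (1 - x / ((k : ℝ) + 1)) :=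
        logRem_le_sq_div (ht.trans_lt hx1)
    _ ≤ (x / ((k : ℝ) + 1)) ^ 2 / (1 - x) := by gcongr
    _ = x ^ 2 / (1 - x) * (1 / ((k : ℝ) + 1) ^ 2) := by rw [div_pow]; ring

lemma logGammaSeq_one_sub_add_sub_logGammaSeq {x : ℝ} (hx1 : x < 1) (j N : ℕ) :
    BohrMollerup.logGammaSeq (1 - x + j) N - BohrMollerup.logGammaSeq (1 + j) N =
      x * ((harmonic (j + (N + 1)) : ℝ) - log N) - x * harmonic j +
        ∑ m ∈ range (N + 1), logRem (x / ((m + j : ℕ) + 1)) := by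
  have hterm (m : ℕ) : log (1 - x + j + m) - log (1 + j + m) =
      -(x / ((m + j : ℕ) + 1)) - logRem (x / ((m + j : ℕ) + 1)) := by
    have hu : (0 : ℝ) < (m + j : ℕ) + 1 := by positivity
    have h1 : (0 : ℝ) < 1 - x / ((m + j : ℕ) + 1) := by
      rw [sub_pos, div_lt_one hu]; push_cast; linarith [(m + j : ℕ).cast_nonneg (α := ℝ)]
    rw [show (1 : ℝ) - x + j + m = ((m + j : ℕ) + 1) * (1 - x / ((m + j : ℕ) + 1)) by
        field_simp; push_cast; ring,
      show (1 : ℝ) + j + m = (m + j : ℕ) + 1 by push_cast; ring,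
      log_mul hu.ne' h1.ne', logRem]
    ring
  have hharm : (harmonic (j + (N + 1)) : ℝ) =
      harmonic j + ∑ m ∈ range (N + 1), 1 / ((m + j : ℕ) + 1 : ℝ) := by
    simp only [harmonic, sum_range_add, Rat.cast_add, Rat.cast_sum]
    push_cast
    simp only [one_div, add_comm]
  have hlogs := sum_congr rfl (fun m (_ : m ∈ range (N + 1)) => hterm m)
  simp only [sum_sub_distrib, sum_neg_distrib] at hlogs
  have hx : x * ∑ m ∈ range (N + 1), 1 / ((m + j : ℕ) + 1 : ℝ) =
      ∑ m ∈ range (N + 1), x / ((m + j : ℕ) + 1 : ℝ) := by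
    simp only [mul_sum, mul_one_div]
  simp only [BohrMollerup.logGammaSeq]
  rw [hharm]
  linear_combination -hlogs - hx

lemma tendsto_harmonic_add_succ_sub_log (j : ℕ) :
    Tendsto (fun N : ℕ => (harmonic (j + (N + 1)) : ℝ) - log N) atTop
      (𝓝 eulerMascheroniConstant) := by
  have hshift : Tendsto (fun N : ℕ => j + (N + 1)) atTop atTop :=
    (tendsto_add_atTop_nat (j + 1)).congr fun N => by omega
  have hlog := (tendsto_log_comp_add_sub_log ((j : ℝ) + 1)).comp tendsto_natCast_atTop_atTop
  have hsum := (tendsto_harmonic_sub_log.comp hshift).add hlog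
  rw [add_zero] at hsum
  refine hsum.congr fun N => ?_
  simp only [Function.comp_apply]
  push_cast
  ring_nf

lemma log_Gamma_one_sub_add_sub_log_Gamma {x : ℝ} (hx0 : 0 ≤ x) (hx1 : x < 1) (j : ℕ) :
    log (Gamma (1 - x + j)) - log (Gamma (1 + j)) =
      x * (eulerMascheroniConstant - harmonic j) +
        ∑' m : ℕ, logRem (x / ((m + j : ℕ) + 1)) := by
  have hf : Summable fun m : ℕ => logRem (x / ((m + j : ℕ) + 1)) :=
    (summable_nat_add_iff j).2 (summable_logRem_div hx0 hx1)
  refine tendsto_nhds_unique ((BohrMollerup.tendsto_log_gamma (by linarith)).sub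
    (BohrMollerup.tendsto_log_gamma (by positivity))) ?_
  simp_rw [logGammaSeq_one_sub_add_sub_logGammaSeq hx1]
  rw [mul_sub]
  exact (((tendsto_harmonic_add_succ_sub_log j).const_mul x).sub_const (x * harmonic j)).add
    (hf.hasSum.tendsto_sum_nat.comp (tendsto_add_atTop_nat 1))

noncomputable def gammaRatioProd (n : ℕ) (x : ℝ) : ℝ :=
  ∏ j ∈ range n, Gamma (1 - x + j) / Gamma (1 + j)

lemma gammaRatioProd_pos {x : ℝ} (hx : x < 1) (n : ℕ) : 0 < gammaRatioProd n x :=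
  prod_pos fun j _ => div_pos (Gamma_pos_of_pos (by positivity)) (Gamma_pos_of_pos (by positivity))

lemma log_gammaRatioProd {x : ℝ} (hx0 : 0 ≤ x) (hx1 : x < 1) (n : ℕ) :
    log (gammaRatioProd n x) =
      x * ∑ j ∈ range n, (eulerMascheroniConstant - harmonic j) +
        ∑' k : ℕ, ((min (k + 1) n : ℕ) : ℝ) * logRem (x / ((k : ℝ) + 1)) := by
  have hpos (j : ℕ) : 0 < Gamma (1 - x + j) := Gamma_pos_of_pos (by positivity)
  rw [gammaRatioProd, log_prod fun j _ => (div_pos (hpos j) (Gamma_pos_of_pos (by positivity))).ne',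
    ← sum_range_tsum_nat_add (summable_logRem_div hx0 hx1), mul_sum, ← sum_add_distrib]
  refine sum_congr rfl fun j _ => ?_
  rw [log_div (hpos j).ne' (Gamma_pos_of_pos (by positivity)).ne',
    log_Gamma_one_sub_add_sub_log_Gamma hx0 hx1]

lemma summable_logRem_two_mul_sub {x : ℝ} (hx0 : 0 ≤ x) (hx : 2 * x < 1) :
    Summable fun k : ℕ =>
      logRem (2 * (x / ((k : ℝ) + 1))) - 2 * logRem (x / ((k : ℝ) + 1)) := by
  simp_rw [← mul_div_assoc]
  exact (summable_logRem_div (by linarith) hx).sub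
    ((summable_logRem_div hx0 (by linarith)).mul_left 2)

lemma log_gammaRatioProd_two_mul_sub {x : ℝ} (hx0 : 0 ≤ x) (hx : 2 * x < 1) (n : ℕ) :
    log (gammaRatioProd n (2 * x)) - 2 * log (gammaRatioProd n x) =
      ∑' k : ℕ, ((min (k + 1) n : ℕ) : ℝ) *
        (logRem (2 * (x / ((k : ℝ) + 1))) - 2 * logRem (x / ((k : ℝ) + 1))) := by
  have h2 := summable_min_mul (summable_logRem_div (by linarith) hx) n
  have h1 := summable_min_mul (summable_logRem_div hx0 (by linarith)) n
  have hsplit : ∑' k : ℕ, ((min (k + 1) n : ℕ) : ℝ) *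
      (logRem (2 * (x / ((k : ℝ) + 1))) - 2 * logRem (x / ((k : ℝ) + 1))) =
      ∑' k : ℕ, ((min (k + 1) n : ℕ) : ℝ) * logRem (2 * x / ((k : ℝ) + 1)) -
        2 * ∑' k : ℕ, ((min (k + 1) n : ℕ) : ℝ) * logRem (x / ((k : ℝ) + 1)) := by
    rw [← tsum_mul_left, ← h2.tsum_sub (h1.mul_left 2)]
    congr 1 with k
    rw [mul_div_assoc]
    ring
  rw [hsplit, log_gammaRatioProd (by linarith) hx, log_gammaRatioProd hx0 (by linarith)]
  ring

noncomputable def logDefect (n : ℕ) : ℝ :=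
  log (gammaRatioProd n (2 / n)) - 2 * log (gammaRatioProd n (1 / n))

lemma sq_mul_logRem_two_mul_sub_bounds {n : ℕ} (hn : 3 ≤ n) (k : ℕ) {w : ℝ} (hw0 : 0 ≤ w)
    (hwk : w ≤ k + 1) :
    w / ((k : ℝ) + 1) ^ 2 ≤
        n ^ 2 * (w * (logRem (2 * (1 / n / (k + 1))) - 2 * logRem (1 / n / (k + 1)))) ∧
      n ^ 2 * (w * (logRem (2 * (1 / n / (k + 1))) - 2 * logRem (1 / n / (k + 1)))) ≤
        w / ((k : ℝ) + 1) ^ 2 + 6 / n * (1 / ((k : ℝ) + 1) ^ 2) := by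
  have hn3 : (3 : ℝ) ≤ n := by exact_mod_cast hn
  set t : ℝ := 1 / n / (k + 1) with ht
  have ht0 : 0 ≤ t := by positivity
  have ht3 : t ≤ 1 / 3 := (div_le_self (by positivity) (by simp)).trans (by gcongr)
  have hsq : (n : ℝ) ^ 2 * t ^ 2 = 1 / ((k : ℝ) + 1) ^ 2 := by rw [ht]; field_simp
  have hwt : w * t ≤ 1 / n := by
    calc w * t ≤ (k + 1) * t := by gcongr
      _ = 1 / n := by rw [ht]; field_simp
  constructor
  · calc w / ((k : ℝ) + 1) ^ 2 = n ^ 2 * (w * t ^ 2) := by rw [div_eq_mul_one_div, ← hsq]; ring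
      _ ≤ _ := by gcongr; exact sq_le_logRem_two_mul_sub ht0 (by linarith)
  · calc n ^ 2 * (w * (logRem (2 * t) - 2 * logRem t)) ≤ n ^ 2 * (w * (t ^ 2 + 6 * t ^ 3)) := by
          gcongr; exact logRem_two_mul_sub_le ht0 ht3
      _ = w / ((k : ℝ) + 1) ^ 2 + 6 * (w * t) * (n ^ 2 * t ^ 2) := by
          rw [div_eq_mul_one_div, ← hsq]; ring
      _ ≤ w / ((k : ℝ) + 1) ^ 2 + 6 * (1 / n) * (n ^ 2 * t ^ 2) := by gcongr
      _ = w / ((k : ℝ) + 1) ^ 2 + 6 / n * (1 / ((k : ℝ) + 1) ^ 2) := by rw [hsq]; ring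

lemma sq_mul_logDefect_sub_tsum_bounds {n : ℕ} (hn : 3 ≤ n) :
    0 ≤ n ^ 2 * logDefect n -
        ∑' k : ℕ, ((min (k + 1) n : ℕ) : ℝ) / ((k : ℝ) + 1) ^ 2 ∧
      n ^ 2 * logDefect n - ∑' k : ℕ, ((min (k + 1) n : ℕ) : ℝ) / ((k : ℝ) + 1) ^ 2 ≤
        6 * (∑' k : ℕ, 1 / ((k : ℝ) + 1) ^ 2) / n := by
  have hn3 : (3 : ℝ) ≤ n := by exact_mod_cast hn
  have hx : 2 * (1 / (n : ℝ)) < 1 := by rw [mul_one_div, div_lt_one (by positivity)]; linarith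
  have hbounds (k : ℕ) :=
    sq_mul_logRem_two_mul_sub_bounds hn k (w := ((min (k + 1) n : ℕ) : ℝ))
      (by positivity) (by exact_mod_cast min_le_left _ _)
  have hL : (n : ℝ) ^ 2 * logDefect n = ∑' k : ℕ, n ^ 2 * (((min (k + 1) n : ℕ) : ℝ) *
      (logRem (2 * (1 / n / (k + 1))) - 2 * logRem (1 / n / (k + 1)))) := by
    rw [logDefect, show (2 : ℝ) / n = 2 * (1 / n) by ring,
      log_gammaRatioProd_two_mul_sub (by positivity) hx, tsum_mul_left]
  have hsL := (summable_min_mul (summable_logRem_two_mul_sub (by positivity) hx) n).mul_left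
    ((n : ℝ) ^ 2)
  have hsW : Summable fun k : ℕ => ((min (k + 1) n : ℕ) : ℝ) / ((k : ℝ) + 1) ^ 2 := by
    simpa only [mul_one_div] using summable_min_mul (summable_one_div_add_sq 1) n
  have hsZ := (summable_one_div_add_sq 1).mul_left (6 / (n : ℝ))
  constructor
  · rw [hL, sub_nonneg]
    exact hsW.tsum_le_tsum (fun k => (hbounds k).1) hsL
  · rw [hL, sub_le_iff_le_add']
    calc _ ≤ ∑' k : ℕ, (((min (k + 1) n : ℕ) : ℝ) / ((k : ℝ) + 1) ^ 2 +
          6 / n * (1 / ((k : ℝ) + 1) ^ 2)) :=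
          hsL.tsum_le_tsum (fun k => (hbounds k).2) (hsW.add hsZ)
      _ = _ := by rw [hsW.tsum_add hsZ, tsum_mul_left]; ring

lemma tendsto_sq_mul_logDefect_sub_log :
    Tendsto (fun n : ℕ => n ^ 2 * logDefect n - log n) atTop
      (𝓝 (eulerMascheroniConstant + 1)) := by
  have hsq : Tendsto (fun n : ℕ => n ^ 2 * logDefect n -
      ∑' k : ℕ, ((min (k + 1) n : ℕ) : ℝ) / ((k : ℝ) + 1) ^ 2) atTop (𝓝 0) := by
    refine squeeze_zero' ?_ ?_ (tendsto_const_div_atTop_nhds_zero_nat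
      (6 * ∑' k : ℕ, 1 / ((k : ℝ) + 1) ^ 2))
    · filter_upwards [eventually_ge_atTop 3] with n hn
      exact (sq_mul_logDefect_sub_tsum_bounds hn).1
    · filter_upwards [eventually_ge_atTop 3] with n hn
      exact (sq_mul_logDefect_sub_tsum_bounds hn).2
  have hlim := (hsq.add tendsto_mul_tsum_one_div_add_sq).add tendsto_harmonic_sub_log
  rw [zero_add, add_comm] at hlim
  refine hlim.congr fun n => ?_
  rw [tsum_min_div_sq]
  ring

lemma tendsto_natCast_mul_logDefect : Tendsto (fun n : ℕ => n * logDefect n) atTop (𝓝 0) := by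
  have h := (tendsto_sq_mul_logDefect_sub_log.div_atTop tendsto_natCast_atTop_atTop).add
    tendsto_log_natCast_div
  rw [zero_add] at h
  refine h.congr' ?_
  filter_upwards [eventually_ne_atTop 0] with n hn
  field_simp
  ring

lemma tendsto_logDefect : Tendsto logDefect atTop (𝓝 0) := by
  refine (tendsto_natCast_mul_logDefect.div_atTop tendsto_natCast_atTop_atTop).congr' ?_
  filter_upwards [eventually_ne_atTop 0] with n hn
  field_simp

lemma tendsto_sq_mul_exp_logDefect_sub_one_sub :
    Tendsto (fun n : ℕ => n ^ 2 * (exp (logDefect n) - 1 - logDefect n)) atTop (𝓝 0) := by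
  have hsmall : ∀ᶠ n : ℕ in atTop, |logDefect n| ≤ 1 :=
    (tendsto_logDefect.eventually (Metric.closedBall_mem_nhds 0 one_pos)).mono fun n hn => by
      simpa using hn
  refine squeeze_zero_norm' ?_ (by simpa using tendsto_natCast_mul_logDefect.pow 2)
  filter_upwards [hsmall] with n hn
  rw [norm_mul, norm_pow, Real.norm_natCast, norm_eq_abs, mul_pow]
  gcongr
  exact abs_exp_sub_one_sub_id_le hn

lemma exp_logDefect {n : ℕ} (hn : 3 ≤ n) :
    exp (logDefect n) = gammaRatioProd n (2 / n) / gammaRatioProd n (1 / n) ^ 2 := by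
  have hn3 : (3 : ℝ) ≤ n := by exact_mod_cast hn
  have hn0 : (0 : ℝ) < n := by positivity
  have hP1 := gammaRatioProd_pos (x := 1 / n) (by rw [div_lt_one hn0]; linarith) n
  have hP2 := gammaRatioProd_pos (x := 2 / n) (by rw [div_lt_one hn0]; linarith) n
  rw [logDefect, exp_sub, two_mul, exp_add, exp_log hP1, exp_log hP2, sq]

lemma tendsto_mul_gammaRatioProd_div_sq_sub_log :
    Tendsto (fun n : ℕ => ((n : ℝ) ^ 2 - 2) * (gammaRatioProd n (2 / n) /
        gammaRatioProd n (1 / n) ^ 2) - ((n : ℝ) ^ 2 - 1) - (eulerMascheroniConstant + log n))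
      atTop (𝓝 0) := by
  have hexp : Tendsto (fun n : ℕ => exp (logDefect n)) atTop (𝓝 1) := by
    simpa [Function.comp_def] using (continuous_exp.tendsto 0).comp tendsto_logDefect
  have h := (tendsto_sq_mul_exp_logDefect_sub_one_sub.add
    (tendsto_sq_mul_logDefect_sub_log.sub_const (eulerMascheroniConstant + 1))).add
    ((hexp.const_sub 1).const_mul 2)
  simp only [sub_self, mul_zero, add_zero] at h
  refine h.congr' ?_
  filter_upwards [eventually_ge_atTop 3] with n hn
  rw [← exp_logDefect hn]
  ring

lemma log_gammaRatioProd_one_div {n : ℕ} (hn : 2 ≤ n) :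
    log (gammaRatioProd n (1 / n)) = eulerMascheroniConstant - harmonic n + 1 +
      ∑' k : ℕ, ((min (k + 1) n : ℕ) : ℝ) * logRem (1 / n / ((k : ℝ) + 1)) := by
  have hn0 : (0 : ℝ) < n := by positivity
  have hn2 : (2 : ℝ) ≤ n := by exact_mod_cast hn
  rw [log_gammaRatioProd (by positivity) (by rw [div_lt_one hn0]; linarith), sum_sub_distrib,
    sum_const, card_range, nsmul_eq_mul, sum_range_harmonic]
  field_simp
  ring

lemma tsum_min_mul_logRem_bounds {n : ℕ} (hn : 3 ≤ n) :
    0 ≤ ∑' k : ℕ, ((min (k + 1) n : ℕ) : ℝ) * logRem (1 / n / ((k : ℝ) + 1)) ∧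
      ∑' k : ℕ, ((min (k + 1) n : ℕ) : ℝ) * logRem (1 / n / ((k : ℝ) + 1)) ≤
        3 / 2 * (∑' k : ℕ, 1 / ((k : ℝ) + 1) ^ 2) / n := by
  have hn3 : (3 : ℝ) ≤ n := by exact_mod_cast hn
  have ht3 (k : ℕ) : 1 / n / ((k : ℝ) + 1) ≤ 1 / 3 :=
    (div_le_self (by positivity) (by simp)).trans (by gcongr)
  have hrem0 (k : ℕ) : 0 ≤ logRem (1 / n / ((k : ℝ) + 1)) :=
    logRem_nonneg (by linarith [ht3 k])
  refine ⟨tsum_nonneg fun k => mul_nonneg (by positivity) (hrem0 k), ?_⟩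
  have hle (k : ℕ) : ((min (k + 1) n : ℕ) : ℝ) * logRem (1 / n / ((k : ℝ) + 1)) ≤
      3 / (2 * n) * (1 / ((k : ℝ) + 1) ^ 2) := by
    calc ((min (k + 1) n : ℕ) : ℝ) * logRem (1 / n / ((k : ℝ) + 1))
        ≤ n * (3 / 2 * (1 / n / ((k : ℝ) + 1)) ^ 2) := by
          gcongr
          · exact hrem0 k
          · exact_mod_cast min_le_right _ _
          · exact logRem_le_of_le_third (ht3 k)
      _ = 3 / (2 * n) * (1 / ((k : ℝ) + 1) ^ 2) := by field_simp
  calc _ ≤ ∑' k : ℕ, 3 / (2 * n) * (1 / ((k : ℝ) + 1) ^ 2) :=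
        (summable_min_mul (summable_logRem_div (by positivity) (by linarith [ht3 0])) n
          ).tsum_le_tsum hle ((summable_one_div_add_sq 1).mul_left _)
    _ = _ := by rw [tsum_mul_left]; field_simp

lemma abs_log_sq_sub_one_add_two_mul_log_gammaRatioProd_sub_two_le {n : ℕ} (hn : 3 ≤ n) :
    |log ((n : ℝ) ^ 2 - 1) + 2 * log (gammaRatioProd n (1 / n)) - 2| ≤
      (3 + 3 * ∑' k : ℕ, 1 / ((k : ℝ) + 1) ^ 2) / n := by
  have hH := abs_harmonic_sub_log_sub_le (n := n) (by omega)
  have hL := abs_log_sq_sub_one_sub_le (n := n) (by omega)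
  obtain ⟨hΔ0, hΔ⟩ := tsum_min_mul_logRem_bounds hn
  rw [log_gammaRatioProd_one_div (by omega),
    show log ((n : ℝ) ^ 2 - 1) + 2 * (eulerMascheroniConstant - harmonic n + 1 +
        ∑' k : ℕ, ((min (k + 1) n : ℕ) : ℝ) * logRem (1 / n / ((k : ℝ) + 1))) - 2 =
      (log ((n : ℝ) ^ 2 - 1) - 2 * log n) -
        2 * ((harmonic n : ℝ) - log n - eulerMascheroniConstant) +
        2 * ∑' k : ℕ, ((min (k + 1) n : ℕ) : ℝ) * logRem (1 / n / ((k : ℝ) + 1)) by ring,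
    show (3 + 3 * ∑' k : ℕ, 1 / ((k : ℝ) + 1) ^ 2) / (n : ℝ) =
      1 / n + 2 * (1 / n) + 2 * (3 / 2 * (∑' k : ℕ, 1 / ((k : ℝ) + 1) ^ 2) / n) by ring]
  refine (abs_add_le _ _).trans (add_le_add ((abs_sub _ _).trans (add_le_add hL ?_)) ?_)
  · rw [abs_mul, abs_two]; gcongr
  · rw [abs_mul, abs_two, abs_of_nonneg hΔ0]; gcongr

lemma exists_abs_mul_gammaRatioProd_sq_sub_exp_two_le :
    ∃ C : ℝ, ∀ᶠ n : ℕ in atTop,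
      |((n : ℝ) ^ 2 - 1) * gammaRatioProd n (1 / n) ^ 2 - exp 2| ≤ C / n := by
  set C₀ : ℝ := 3 + 3 * ∑' k : ℕ, 1 / ((k : ℝ) + 1) ^ 2
  refine ⟨2 * exp 2 * C₀, ?_⟩
  filter_upwards [eventually_ge_atTop 3, tendsto_natCast_atTop_atTop.eventually_ge_atTop C₀]
    with n hn hnC
  have hn0 : (0 : ℝ) < n := by positivity
  have hn3 : (3 : ℝ) ≤ n := by exact_mod_cast hn
  have hP := gammaRatioProd_pos (x := 1 / n) (by rw [div_lt_one hn0]; linarith) n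
  set v := log ((n : ℝ) ^ 2 - 1) + 2 * log (gammaRatioProd n (1 / n)) - 2
  have hexp : ((n : ℝ) ^ 2 - 1) * gammaRatioProd n (1 / n) ^ 2 = exp 2 * exp v := by
    rw [← exp_add, add_sub_cancel, exp_add, exp_log (by nlinarith), two_mul, exp_add, exp_log hP]
    ring
  have hv : |v| ≤ C₀ / n := abs_log_sq_sub_one_add_two_mul_log_gammaRatioProd_sub_two_le hn
  have hv1 : |v| ≤ 1 := hv.trans ((div_le_one hn0).2 hnC)
  rw [hexp, ← mul_sub_one, abs_mul, abs_of_pos (exp_pos 2)]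
  calc exp 2 * |exp v - 1| ≤ exp 2 * (2 * |v|) := by gcongr; exact abs_exp_sub_one_le hv1
    _ ≤ exp 2 * (2 * (C₀ / n)) := by gcongr
    _ = 2 * exp 2 * C₀ / n := by ring

lemma mu0_self (p n : ℕ) :
    mu0 p n n = Gamma (n * n) / (n ^ p * Gamma (n * n - p)) * gammaRatioProd n (p / n) := by
  simp only [mu0, gammaRatioProd, sub_self, zero_add]

lemma Gamma_eq_sub_one_mul {s : ℝ} (hs : 1 < s) : Gamma s = (s - 1) * Gamma (s - 1) := by
  rw [← Gamma_add_one (by linarith), sub_add_cancel]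

lemma sq_mul_mu0_two_sub_mu0_one_sq {n : ℕ} (hn : 3 ≤ n) :
    (n : ℝ) ^ 2 * (mu0 2 n n - mu0 1 n n ^ 2) =
      ((n : ℝ) ^ 2 - 1) * gammaRatioProd n (1 / n) ^ 2 *
        (((n : ℝ) ^ 2 - 2) * (gammaRatioProd n (2 / n) / gammaRatioProd n (1 / n) ^ 2) -
          ((n : ℝ) ^ 2 - 1)) := by
  have hn3 : (3 : ℝ) ≤ n := by exact_mod_cast hn
  have hn0 : (0 : ℝ) < n := by positivity
  have hP := gammaRatioProd_pos (x := 1 / n) (by rw [div_lt_one hn0]; linarith) n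
  have hG2 : 0 < Gamma (n * n - 2) := Gamma_pos_of_pos (by nlinarith)
  have hG1 : Gamma (n * n - 1) = (n * n - 2) * Gamma (n * n - 2) := by
    rw [Gamma_eq_sub_one_mul (by nlinarith)]; ring_nf
  have hG0 : Gamma (n * n) = (n * n - 1) * Gamma (n * n - 1) := Gamma_eq_sub_one_mul (by nlinarith)
  have hG1pos : 0 < Gamma (n * n - 1) := Gamma_pos_of_pos (by nlinarith)
  have hμ1 : Gamma (n * n) / (n ^ 1 * Gamma (n * n - (1 : ℕ))) = (n * n - 1) / n := by
    rw [hG0, Nat.cast_one, pow_one, mul_div_mul_right _ _ hG1pos.ne']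
  have hμ2 : Gamma (n * n) / (n ^ 2 * Gamma (n * n - (2 : ℕ))) =
      (n * n - 1) * (n * n - 2) / n ^ 2 := by
    rw [hG0, hG1, Nat.cast_ofNat, ← mul_assoc, mul_div_mul_right _ _ hG2.ne']
  rw [mu0_self, mu0_self, hμ1, hμ2]
  push_cast
  field_simp

/-- for the square case `m = n` (`c = 1`), the second cumulant
`κ2(n) = μ0(2,n,n) − μ0(1,n,n)²` satisfies `n²·κ2(n) − e²(γ + ln n) → 0` as `n → ∞`. -/
theorem second_cumulant_square_case :
    Tendsto
      (fun n : ℕ => (n : ℝ) ^ 2 * (mu0 2 n n - (mu0 1 n n) ^ 2)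
        - Real.exp 1 ^ 2 * (Real.eulerMascheroniConstant + Real.log n))
      atTop (𝓝 0) := by
  obtain ⟨C, hC⟩ := exists_abs_mul_gammaRatioProd_sq_sub_exp_two_le
  have hD := squeeze_zero_norm'
    (f := fun n : ℕ => ((n : ℝ) ^ 2 - 1) * gammaRatioProd n (1 / n) ^ 2 - exp 2) hC
    (tendsto_const_div_atTop_nhds_zero_nat C)
  have hDlog := tendsto_mul_const_add_log_of_abs_le eulerMascheroniConstant hC
  have hU := tendsto_mul_gammaRatioProd_div_sq_sub_log
  -- `D U - e² (γ + log n)`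
  --   `= (D - e²) (U - γ - log n) + e² (U - γ - log n) + (D - e²) (γ + log n)`
  have hlim := ((hD.mul hU).add (hU.const_mul (exp 2))).add hDlog
  rw [mul_zero, mul_zero, add_zero, add_zero] at hlim
  refine hlim.congr' ?_
  filter_upwards [eventually_ge_atTop 3] with n hn
  rw [sq_mul_mu0_two_sub_mu0_one_sq hn, exp_one_pow]
  push_cast
  ring
end

section
/- Let n ≤ m be positive integers with 2 < n(m−n+1), and let 0 < y_1 ≤ … ≤ y_n be real numbers. Then μ1(2,n,m,y) = Ψ1(y)²·μ0(2,n,m)·( Ψ2(y)² + (Ψ3(y) − Ψ2(y)²)/(nm − 1) ). -/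
open Finset

/-- Exact `p`-th moment of the GLRT statistic under `H₁`, in terms of the covariance
eigenvalues `y`. -/
noncomputable def mu1 (p n m : ℕ) (y : Fin n → ℝ) : ℝ :=
  (Nat.factorial p : ℝ) / (n : ℝ) ^ p *
    (∏ i, y i ^ (-(p : ℝ) / n)) *
    (∏ j ∈ Finset.range n,
      Real.Gamma ((m : ℝ) - n + 1 - p / n + j) / Real.Gamma ((m : ℝ) - n + 1 + j)) *
    ∑ k ∈ Finset.Nat.antidiagonalTuple n p,
      ∏ i, Real.Gamma ((m : ℝ) - p / n + k i) * y i ^ (k i)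
        / (Real.Gamma ((k i : ℝ) + 1) * Real.Gamma ((m : ℝ) - p / n))

/-- `Ψ₁(y) = ∏ y_i^{-1/n}`. -/
noncomputable def Psi1 {n : ℕ} (y : Fin n → ℝ) : ℝ := ∏ i, y i ^ (-(1 : ℝ) / n)

/-- `Ψ_{ℓ+1}(y) = (1/n) Σ y_i^ℓ` for `ℓ ≥ 1`. -/
noncomputable def PsiS {n : ℕ} (ℓ : ℕ) (y : Fin n → ℝ) : ℝ := (1 / (n : ℝ)) * ∑ i, y i ^ ℓ

lemma sum_piAntidiag_cons_mul {ι : Type*} [DecidableEq ι] {i : ι} {s : Finset ι} (hi : i ∉ s)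
    (g : ι → ℕ → ℝ) (n : ℕ) :
    ∑ f ∈ piAntidiag (cons i s hi) n, ∏ j ∈ cons i s hi, g j (f j) =
      ∑ p ∈ antidiagonal n, g i p.1 * ∑ f ∈ piAntidiag s p.2, ∏ j ∈ s, g j (f j) := by
  rw [piAntidiag_cons, sum_disjiUnion]
  refine sum_congr rfl fun p hp => ?_
  rw [sum_map, mul_sum]
  refine sum_congr rfl fun f hf => ?_
  have hfi : f i = 0 := by
    rcases mem_piAntidiag.mp hf with ⟨-, h⟩
    by_contra h'; exact hi (h i h')
  rw [prod_cons]
  simp only [addRightEmbedding_apply, Pi.add_apply]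
  congr 1
  · simp [hfi]
  · refine prod_congr rfl fun j hj => ?_
    have : j ≠ i := fun h => hi (h ▸ hj)
    simp [this]

lemma sum_piAntidiag_zero' {ι : Type*} [DecidableEq ι] (s : Finset ι)
    (g : ι → ℕ → ℝ) (hg : ∀ i, g i 0 = 1) :
    ∑ f ∈ piAntidiag s 0, ∏ j ∈ s, g j (f j) = 1 := by
  rw [piAntidiag_zero, sum_singleton]
  exact prod_eq_one fun i _ => by simpa using hg i

lemma sum_piAntidiag_one' {ι : Type*} [DecidableEq ι] (s : Finset ι)
    (g : ι → ℕ → ℝ) (hg : ∀ i, g i 0 = 1) :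
    ∑ f ∈ piAntidiag s 1, ∏ j ∈ s, g j (f j) = ∑ i ∈ s, g i 1 := by
  induction s using Finset.cons_induction with
  | empty => simp [piAntidiag_empty]
  | cons i s hi ih =>
    rw [sum_piAntidiag_cons_mul hi,
      show (antidiagonal 1 : Finset (ℕ × ℕ)) = {(0,1),(1,0)} by decide]
    rw [sum_insert (by decide), sum_singleton, sum_cons, ih,
      sum_piAntidiag_zero' s g hg, hg i]
    ring

lemma sum_piAntidiag_two' {ι : Type*} [DecidableEq ι] (s : Finset ι)
    (g : ι → ℕ → ℝ) (hg : ∀ i, g i 0 = 1) :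
    ∑ f ∈ piAntidiag s 2, ∏ j ∈ s, g j (f j) =
      ∑ i ∈ s, g i 2 + ((∑ i ∈ s, g i 1) ^ 2 - ∑ i ∈ s, (g i 1) ^ 2) / 2 := by
  induction s using Finset.cons_induction with
  | empty => simp [piAntidiag_empty]
  | cons i s hi ih =>
    rw [sum_piAntidiag_cons_mul hi,
      show (antidiagonal 2 : Finset (ℕ × ℕ)) = {(0,2),(1,1),(2,0)} by decide]
    rw [sum_insert (by decide), sum_insert (by decide), sum_singleton, ih,
      sum_piAntidiag_one' s g hg, sum_piAntidiag_zero' s g hg, hg i,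
      sum_cons, sum_cons, sum_cons]
    ring

/-- the second moment under `H₁` satisfies
`μ1(2,n,m,y) = Ψ₁²·μ0(2,n,m)·(Ψ₂² + (Ψ₃ − Ψ₂²)/(nm − 1))`. -/
theorem mu1_two_eq (n m : ℕ) (hn : 0 < n) (hnm : n ≤ m) (h2 : 2 < n * (m - n + 1))
    (y : Fin n → ℝ) (hy : ∀ i, 0 < y i) (hmono : Monotone y) :
    mu1 2 n m y = Psi1 y ^ 2 * mu0 2 n m *
      (PsiS 1 y ^ 2 + (PsiS 2 y - PsiS 1 y ^ 2) / ((n : ℝ) * m - 1)) := by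
  have hn0 : (n:ℝ) ≠ 0 := Nat.cast_ne_zero.mpr hn.ne'
  have hm3 : 3 ≤ n * m := by
    have h1 : n * (m - n + 1) ≤ n * m := by
      apply Nat.mul_le_mul_left
      omega
    omega
  have hnm3 : (3:ℝ) ≤ (n:ℝ) * m := by exact_mod_cast hm3
  simp only [mu1, mu0, Psi1, PsiS, Nat.cast_ofNat, Nat.factorial_two]
  set a : ℝ := (m:ℝ) - 2 / n with ha_def
  have ha1 : (1:ℝ) ≤ a := by
    rcases Nat.lt_or_ge n 2 with h | h
    · interval_cases n
      have hm : 3 ≤ m := by omega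
      have : (3:ℝ) ≤ m := by exact_mod_cast hm
      rw [ha_def]
      push_cast
      linarith
    · have h2n : (2:ℝ) ≤ n := by exact_mod_cast h
      have hmn : (2:ℝ) ≤ m := by exact_mod_cast le_trans h hnm
      have : 2 / (n:ℝ) ≤ 1 := by
        rw [div_le_one (by linarith)]; linarith
      rw [ha_def]; linarith
  have ha0 : a ≠ 0 := by linarith
  have ha10 : a + 1 ≠ 0 := by linarith
  have hGa : Real.Gamma a ≠ 0 := (Real.Gamma_pos_of_pos (by linarith)).ne'
  -- the coefficient function
  set g : Fin n → ℕ → ℝ := fun i k =>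
    Real.Gamma (a + k) * y i ^ k / (Real.Gamma ((k:ℝ) + 1) * Real.Gamma a) with hg_def
  have hg0 : ∀ i, g i 0 = 1 := by
    intro i
    simp only [hg_def, Nat.cast_zero, add_zero, pow_zero, mul_one, zero_add, Real.Gamma_one,
      one_mul]
    exact div_self hGa
  have hg1 : ∀ i, g i 1 = a * y i := by
    intro i
    simp only [hg_def, Nat.cast_one, pow_one]
    rw [Real.Gamma_add_one ha0, show (1:ℝ) + 1 = 2 by norm_num, Real.Gamma_two]
    field_simp
  have hg2 : ∀ i, g i 2 = (a + 1) * a / 2 * y i ^ 2 := by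
    intro i
    simp only [hg_def, Nat.cast_ofNat]
    rw [show a + 2 = (a + 1) + 1 by ring, Real.Gamma_add_one ha10, Real.Gamma_add_one ha0,
      show (2:ℝ) + 1 = 3 by norm_num,
      show Real.Gamma 3 = 2 by
        rw [show (3:ℝ) = 2 + 1 by norm_num, Real.Gamma_add_one two_ne_zero, Real.Gamma_two]
        ring]
    field_simp
  have hsum : (∑ k ∈ Finset.Nat.antidiagonalTuple n 2, ∏ i, g i (k i))
      = a / 2 * (a * (∑ i, y i) ^ 2 + ∑ i, y i ^ 2) := by
    rw [← Finset.piAntidiag_univ_fin_eq_antidiagonalTuple, sum_piAntidiag_two' univ g hg0,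
      Finset.sum_congr rfl (fun i _ => hg2 i), Finset.sum_congr rfl (fun i _ => hg1 i),
      Finset.sum_congr rfl (fun i (_ : i ∈ univ) => by rw [hg1 i] :
        ∀ i ∈ univ, (g i 1) ^ 2 = (a * y i) ^ 2)]
    simp only [mul_pow, ← Finset.mul_sum]
    ring
  have hsum' : (∑ k ∈ Finset.Nat.antidiagonalTuple n 2,
      ∏ i, Real.Gamma (a + ↑(k i)) * y i ^ (k i) / (Real.Gamma (↑(k i) + 1) * Real.Gamma a))
      = a / 2 * (a * (∑ i, y i) ^ 2 + ∑ i, y i ^ 2) := hsum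
  rw [hsum']
  -- the product of eigenvalue powers
  have hP : (∏ i, y i ^ (-(1:ℝ) / n)) ^ 2 = ∏ i, y i ^ (-(2:ℝ) / n) := by
    rw [← Finset.prod_pow]
    refine Finset.prod_congr rfl fun i _ => ?_
    rw [← Real.rpow_natCast (y i ^ (-(1:ℝ)/n)) 2, ← Real.rpow_mul (hy i).le,
      show (-(1:ℝ)/n) * (2:ℕ) = -(2:ℝ)/n by push_cast; ring]
  rw [hP]
  -- the Gamma quotient
  have hmn1 : (m:ℝ) * n - 1 ≠ 0 := by nlinarith
  have hmn2 : (m:ℝ) * n - 2 ≠ 0 := by nlinarith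
  have hG : Real.Gamma ((m:ℝ) * n) =
      ((m:ℝ) * n - 1) * (((m:ℝ) * n - 2) * Real.Gamma ((m:ℝ) * n - 2)) := by
    rw [show (m:ℝ) * n = ((m:ℝ) * n - 2) + 1 + 1 by ring, Real.Gamma_add_one (by
      rw [show (m:ℝ) * n - 2 + 1 = (m:ℝ) * n - 1 by ring]; nlinarith),
      Real.Gamma_add_one hmn2]
    ring
  rw [hG]
  have hGmn : Real.Gamma ((m:ℝ) * n - 2) ≠ 0 :=
    (Real.Gamma_pos_of_pos (by nlinarith)).ne'
  have hnm1 : (n:ℝ) * m - 1 ≠ 0 := by nlinarith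
  set C : ℝ := ∏ j ∈ Finset.range n,
      Real.Gamma ((m : ℝ) - n + 1 - 2 / n + j) / Real.Gamma ((m : ℝ) - n + 1 + j) with hC
  set P : ℝ := ∏ i, y i ^ (-(2:ℝ) / (n:ℝ)) with hPdef
  set G : ℝ := Real.Gamma ((m:ℝ) * n - 2) with hGdef
  set T1 : ℝ := ∑ i, y i with hT1
  set T2 : ℝ := ∑ i, y i ^ 2 with hT2
  rw [ha_def]
  field_simp
  ring
end

section
/- Let n ≤ m be positive integers with 3 < n(m−n+1), and let 0 < y_1 ≤ … ≤ y_n be real numbers. Then μ1(3,n,m,y) = Ψ1(y)³·μ0(3,n,m)·( Ψ2(y)³ + Ψ2(y)³/(nm − 2) + (3Ψ2(y)Ψ3(y) − 4Ψ2(y)³)/(nm − 1) + (2Ψ4(y) − 3Ψ2(y)Ψ3(y))/((nm − 1)(nm − 2)) ). -/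
/-!
Each factor `Γ(a + k) / (Γ(a) k!)` in `μ1`, with `a = m - p/n`, is the rising factorial
`a⁽ᵏ⁾ / k!`, so the sum over compositions in `μ1` is the coefficient of `t^p` in
`∏ᵢ (1 - yᵢ t)^(-a)`. For `p = 3` this coefficient is a polynomial in `a` and the power sums
`∑ yᵢ, ∑ yᵢ², ∑ yᵢ³`. On the other side `Γ(mn) / Γ(mn - 3) = (mn - 3)(mn - 2)(mn - 1)` turns the
prefactor of `μ1` into that of `μ0`, and since `n a = mn - 3` the claim becomes an identity of
rational functions.
-/

open Finset

theorem Finset.Nat.sum_antidiagonalTuple_succ {M : Type*} [AddCommMonoid M] (k n : ℕ)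
    (g : (Fin (k + 1) → ℕ) → M) :
    ∑ x ∈ antidiagonalTuple (k + 1) n, g x
      = ∑ p ∈ antidiagonal n, ∑ x ∈ antidiagonalTuple k p.2, g (Fin.cons p.1 x) := by
  simp only [Finset.sum, antidiagonalTuple, Multiset.Nat.antidiagonalTuple,
    List.Nat.antidiagonalTuple, Multiset.map_coe, Multiset.sum_coe, List.flatMap,
    List.map_flatten, List.sum_flatten, List.map_map, Function.comp_def]
  rfl

section WeakCompositionSum

variable {R : Type*} [CommSemiring R]

/-- The coefficient of `t ^ p` in `∏ i, ∑ k, f i k * t ^ k`. -/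
def weakCompositionSum (n p : ℕ) (f : Fin n → ℕ → R) : R :=
  ∑ k ∈ Finset.Nat.antidiagonalTuple n p, ∏ i, f i (k i)

theorem weakCompositionSum_succ (n p : ℕ) (f : Fin (n + 1) → ℕ → R) :
    weakCompositionSum (n + 1) p f
      = ∑ q ∈ HasAntidiagonal.antidiagonal p,
          f 0 q.1 * weakCompositionSum n q.2 (fun i => f i.succ) := by
  simp only [weakCompositionSum, Finset.Nat.sum_antidiagonalTuple_succ, Fin.prod_univ_succ,
    Fin.cons_zero, Fin.cons_succ, mul_sum]

theorem weakCompositionSum_zero_right {n : ℕ} {f : Fin n → ℕ → R} (h0 : ∀ i, f i 0 = 1) :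
    weakCompositionSum n 0 f = 1 := by
  simp [weakCompositionSum, Finset.Nat.antidiagonalTuple_zero_right, h0]

theorem weakCompositionSum_one {n : ℕ} {f : Fin n → ℕ → R} (h0 : ∀ i, f i 0 = 1) :
    weakCompositionSum n 1 f = ∑ i, f i 1 := by
  induction n with
  | zero => simp [weakCompositionSum]
  | succ n ih =>
    have h0' : ∀ i, f (Fin.succ i) 0 = 1 := fun i => h0 i.succ
    simp only [weakCompositionSum_succ, Finset.Nat.sum_antidiagonal_eq_sum_range_succ_mk,
      sum_range_succ, sum_range_zero, Fin.sum_univ_succ, weakCompositionSum_zero_right h0',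
      ih h0', h0]
    ring

end WeakCompositionSum

section WeakCompositionSumRing

variable {R : Type*} [CommRing R]

theorem two_mul_weakCompositionSum_two {n : ℕ} {f : Fin n → ℕ → R} (h0 : ∀ i, f i 0 = 1) :
    2 * weakCompositionSum n 2 f = 2 * ∑ i, f i 2 + (∑ i, f i 1) ^ 2 - ∑ i, f i 1 ^ 2 := by
  induction n with
  | zero => simp [weakCompositionSum]
  | succ n ih =>
    have h0' : ∀ i, f (Fin.succ i) 0 = 1 := fun i => h0 i.succ
    simp only [weakCompositionSum_succ, Finset.Nat.sum_antidiagonal_eq_sum_range_succ_mk,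
      sum_range_succ, sum_range_zero, Fin.sum_univ_succ, weakCompositionSum_zero_right h0',
      weakCompositionSum_one h0', h0]
    linear_combination ih h0'

theorem six_mul_weakCompositionSum_three {n : ℕ} {f : Fin n → ℕ → R} (h0 : ∀ i, f i 0 = 1) :
    6 * weakCompositionSum n 3 f
      = 6 * ∑ i, f i 3 + 6 * ((∑ i, f i 2) * ∑ i, f i 1 - ∑ i, f i 2 * f i 1)
        + (∑ i, f i 1) ^ 3 - 3 * (∑ i, f i 1) * (∑ i, f i 1 ^ 2) + 2 * ∑ i, f i 1 ^ 3 := by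
  induction n with
  | zero => simp [weakCompositionSum]
  | succ n ih =>
    have h0' : ∀ i, f (Fin.succ i) 0 = 1 := fun i => h0 i.succ
    simp only [weakCompositionSum_succ, Finset.Nat.sum_antidiagonal_eq_sum_range_succ_mk,
      sum_range_succ, sum_range_zero, Fin.sum_univ_succ, weakCompositionSum_zero_right h0',
      weakCompositionSum_one h0', h0]
    linear_combination ih h0' + 3 * f 0 1 * two_mul_weakCompositionSum_two h0'

theorem six_mul_weakCompositionSum_three_mul_pow {n : ℕ} (c : ℕ → R) (y : Fin n → R)
    (hc : c 0 = 1) :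
    6 * weakCompositionSum n 3 (fun i k => c k * y i ^ k)
      = 6 * c 3 * ∑ i, y i ^ 3 + 6 * c 2 * c 1 * ((∑ i, y i ^ 2) * ∑ i, y i - ∑ i, y i ^ 3)
        + c 1 ^ 3 * ((∑ i, y i) ^ 3 - 3 * (∑ i, y i) * (∑ i, y i ^ 2) + 2 * ∑ i, y i ^ 3) := by
  have hmul : ∀ i, c 2 * y i ^ 2 * (c 1 * y i) = c 2 * c 1 * y i ^ 3 := fun i => by ring
  rw [six_mul_weakCompositionSum_three (by simp [hc])]
  simp only [pow_one, hmul, mul_pow, ← mul_sum]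
  ring

end WeakCompositionSumRing

theorem Real.Gamma_add_nat_div_Gamma {a : ℝ} (ha : 0 < a) (k : ℕ) :
    Real.Gamma (a + k) / Real.Gamma a = (ascPochhammer ℝ k).eval a := by
  induction k with
  | zero => simp [(Real.Gamma_pos_of_pos ha).ne']
  | succ k ih =>
    rw [Nat.cast_succ, ← add_assoc, Real.Gamma_add_one (by positivity), ascPochhammer_succ_eval,
      ← ih, mul_div_assoc, mul_comm]

theorem Psi1_pow {n : ℕ} {y : Fin n → ℝ} (hy : ∀ i, 0 ≤ y i) (p : ℕ) :
    Psi1 y ^ p = ∏ i, y i ^ (-(p : ℝ) / n) := by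
  rw [Psi1, ← prod_pow]
  refine prod_congr rfl fun i _ => ?_
  rw [← Real.rpow_natCast, ← Real.rpow_mul (hy i)]
  ring_nf

theorem mu1_mul_ascPochhammer_eq {p n m : ℕ} (hp : p < n * m) (y : Fin n → ℝ) :
    mu1 p n m y * (ascPochhammer ℝ p).eval ((m : ℝ) * n - p)
      = (p.factorial : ℝ) * (∏ i, y i ^ (-(p : ℝ) / n)) * mu0 p n m *
        weakCompositionSum n p
          (fun i k => (ascPochhammer ℝ k).eval ((m : ℝ) - p / n) / k.factorial * y i ^ k) := by
  have hn : (0 : ℝ) < n := by exact_mod_cast Nat.pos_of_mul_pos_right (p.zero_le.trans_lt hp)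
  have hpN : (p : ℝ) < m * n := by rw [mul_comm]; exact_mod_cast hp
  have ha : 0 < (m : ℝ) - p / n := by rwa [sub_pos, div_lt_iff₀ hn]
  have hcoeff : ∀ (k : ℕ) (t : ℝ), Real.Gamma ((m : ℝ) - p / n + k) * t ^ k
      / (Real.Gamma ((k : ℝ) + 1) * Real.Gamma ((m : ℝ) - p / n))
      = (ascPochhammer ℝ k).eval ((m : ℝ) - p / n) / k.factorial * t ^ k := by
    intro k t
    rw [← Real.Gamma_add_nat_div_Gamma ha, Real.Gamma_nat_eq_factorial]
    ring
  have hGamma := Real.Gamma_add_nat_div_Gamma (sub_pos.mpr hpN) p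
  rw [sub_add_cancel] at hGamma
  simp only [mu1, mu0, weakCompositionSum, hcoeff, ← hGamma]
  field_simp

theorem mu1_three_eq_general (n m : ℕ) (hnm : n ≤ m) (h3 : 3 < n * (m - n + 1))
    (y : Fin n → ℝ) (hy : ∀ i, 0 < y i) :
    mu1 3 n m y = Psi1 y ^ 3 * mu0 3 n m *
      (PsiS 1 y ^ 3 + PsiS 1 y ^ 3 / ((n : ℝ) * m - 2)
        + (3 * PsiS 1 y * PsiS 2 y - 4 * PsiS 1 y ^ 3) / ((n : ℝ) * m - 1)
        + (2 * PsiS 3 y - 3 * PsiS 1 y * PsiS 2 y)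
          / (((n : ℝ) * m - 1) * ((n : ℝ) * m - 2))) := by
  have hn : n ≠ 0 := by rintro rfl; simp at h3
  have h3nm : 3 < n * m := h3.trans_le (Nat.mul_le_mul_left n (by omega))
  have hN : (4 : ℝ) ≤ n * m := by exact_mod_cast h3nm
  have hN1 : (m : ℝ) * n - 1 ≠ 0 := by linarith
  have hN2 : (m : ℝ) * n - 2 ≠ 0 := by linarith
  have hN3 : (m : ℝ) * n - 3 ≠ 0 := by linarith
  have hpoch : (ascPochhammer ℝ 3).eval ((m : ℝ) * n - 3)
      = ((m : ℝ) * n - 3) * ((m : ℝ) * n - 2) * ((m : ℝ) * n - 1) := by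
    simp only [ascPochhammer_succ_eval, ascPochhammer_zero, Polynomial.eval_one]
    ring
  have hmu1 := mu1_mul_ascPochhammer_eq h3nm y
  have hsum := six_mul_weakCompositionSum_three_mul_pow
    (fun k => (ascPochhammer ℝ k).eval ((m : ℝ) - 3 / n) / k.factorial) y (by simp)
  generalize weakCompositionSum (R := ℝ) n 3 _ = T at hmu1 hsum
  rw [← Psi1_pow (fun i => (hy i).le), Nat.cast_ofNat, hpoch] at hmu1
  simp only [ascPochhammer_succ_eval, ascPochhammer_zero, Polynomial.eval_one, Nat.factorial] at hsum
  calc mu1 3 n m y = Psi1 y ^ 3 * mu0 3 n m * (6 * T)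
        / (((m : ℝ) * n - 3) * ((m : ℝ) * n - 2) * ((m : ℝ) * n - 1)) := by
        rw [eq_div_iff (by simp [hN1, hN2, hN3]), hmu1, Nat.factorial]; ring
    _ = _ := by
        rw [hsum]
        simp only [PsiS]
        field_simp
        ring

/-- the third moment under `H₁` satisfies
`μ1(3,n,m,y) = Ψ₁³·μ0(3,n,m)·(Ψ₂³ + Ψ₂³/(nm−2) + (3Ψ₂Ψ₃ − 4Ψ₂³)/(nm−1)
  + (2Ψ₄ − 3Ψ₂Ψ₃)/((nm−1)(nm−2)))`. -/
theorem mu1_three_eq (n m : ℕ) (hn : 0 < n) (hnm : n ≤ m) (h3 : 3 < n * (m - n + 1))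
    (y : Fin n → ℝ) (hy : ∀ i, 0 < y i) (hmono : Monotone y) :
    mu1 3 n m y = Psi1 y ^ 3 * mu0 3 n m *
      (PsiS 1 y ^ 3 + PsiS 1 y ^ 3 / ((n : ℝ) * m - 2)
        + (3 * PsiS 1 y * PsiS 2 y - 4 * PsiS 1 y ^ 3) / ((n : ℝ) * m - 1)
        + (2 * PsiS 3 y - 3 * PsiS 1 y * PsiS 2 y)
          / (((n : ℝ) * m - 1) * ((n : ℝ) * m - 2))) :=
  mu1_three_eq_general n m hnm h3 y hy
end
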